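/- After decreasing the cost of edge {b,d}, any edge {u,v} of the old cut tree whose induced cut has cost 0, or which corresponds to a bridge of G, still induces a minimum u-v-cut in the decreased graph: any u-v-cut in G⁻ cheaper than cost(S) would have to separate b and d, but such a cut crossing {b,d} in addition to the bridge/zero cut is at least as expensive. -/

import Mathlib

open Finset

variable {V : Type*}

/-- Cost of the cut given by side `S`: sum of costs of ordered pairs crossing the cut. -/
def cutCost [Fintype V] [DecidableEq V] (c : V → V → NNReal) (S : Finset V) : NNReal :=
  ∑ x ∈ S, ∑ y ∈ Sᶜ, c x y

/-- Minimum `u`-`v`-cut value. -/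
noncomputable def minCut [Fintype V] [DecidableEq V] (c : V → V → NNReal) (u v : V) : NNReal :=
  sInf {w : NNReal | ∃ S : Finset V, u ∈ S ∧ v ∉ S ∧ cutCost c S = w}

/-!
The decrease only touches the pair `{b, d}`, which does not cross `S`, so `S` costs the same
before and after. A cut of cost `0` is trivially still minimal. In the bridge case the cost of `S`
is `c u v = cm u v`, and every `u`-`v`-cut pays at least the single pair `(u, v)`.
-/

theorem not_eq_pair_of_mem_of_notMem {S : Finset V} {b d x y : V} (hsep : b ∈ S ↔ d ∈ S)
    (hx : x ∈ S) (hy : y ∉ S) : ¬((x = b ∧ y = d) ∨ (x = d ∧ y = b)) := by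
  rintro (⟨rfl, rfl⟩ | ⟨rfl, rfl⟩)
  · exact hy (hsep.mp hx)
  · exact hy (hsep.mpr hx)

section CutLemmas

variable [Fintype V] [DecidableEq V]

theorem cutCost_congr {c c' : V → V → NNReal} {S : Finset V}
    (h : ∀ x ∈ S, ∀ y ∉ S, c x y = c' x y) : cutCost c S = cutCost c' S :=
  sum_congr rfl fun x hx => sum_congr rfl fun y hy => h x hx y (mem_compl.mp hy)

theorem le_cutCost {c : V → V → NNReal} {S : Finset V} {x y : V} (hx : x ∈ S) (hy : y ∉ S) :
    c x y ≤ cutCost c S :=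
  calc c x y ≤ ∑ z ∈ Sᶜ, c x z := single_le_sum (fun _ _ => zero_le) (mem_compl.mpr hy)
    _ ≤ cutCost c S := single_le_sum (f := fun x => ∑ z ∈ Sᶜ, c x z) (fun _ _ => zero_le) hx

theorem minCut_le_cutCost (c : V → V → NNReal) {u v : V} {S : Finset V} (huS : u ∈ S)
    (hvS : v ∉ S) : minCut c u v ≤ cutCost c S :=
  csInf_le (OrderBot.bddBelow _) ⟨S, huS, hvS, rfl⟩

theorem le_minCut (c : V → V → NNReal) {u v : V} (huv : u ≠ v) : c u v ≤ minCut c u v := by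
  refine le_csInf ⟨_, {u}, mem_singleton_self u, by simpa using huv.symm, rfl⟩ ?_
  rintro w ⟨T, huT, hvT, rfl⟩
  exact le_cutCost huT hvT

end CutLemmas

theorem zero_or_bridge_cut_preserved_general [Fintype V] [DecidableEq V]
    (c cm : V → V → NNReal)
    (b d : V)
    (h_agree : ∀ x y : V, ¬((x = b ∧ y = d) ∨ (x = d ∧ y = b)) → cm x y = c x y)
    (u v : V) (S : Finset V) (huS : u ∈ S) (hvS : v ∉ S)
    (hmin : cutCost c S = minCut c u v)
    (hcase : cutCost c S = 0 ∨
      ((∀ x ∈ S, ∀ y : V, y ∉ S → c x y ≠ 0 → x = u ∧ y = v) ∧ c u v = minCut c u v))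
    (hsep : b ∈ S ↔ d ∈ S) :
    cutCost cm S = minCut cm u v := by
  have hcost : cutCost cm S = cutCost c S :=
    cutCost_congr fun x hx y hy => h_agree x y (not_eq_pair_of_mem_of_notMem hsep hx hy)
  refine le_antisymm ?_ (minCut_le_cutCost cm huS hvS)
  rcases hcase with hzero | ⟨-, hbridge⟩
  · rw [hcost, hzero]
    exact zero_le
  · calc cutCost cm S = c u v := by rw [hcost, hmin, hbridge]
      _ = cm u v := (h_agree u v (not_eq_pair_of_mem_of_notMem hsep huS hvS)).symm
      _ ≤ minCut cm u v := le_minCut cm (ne_of_mem_of_not_mem huS hvS)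

theorem zero_or_bridge_cut_preserved [Fintype V] [DecidableEq V]
    (c cm : V → V → NNReal)
    (hsymm : ∀ x y, c x y = c y x) (b d : V) (hbd : b ≠ d)
    (Δ : NNReal) (hΔpos : 0 < Δ) (hΔ : Δ ≤ c b d)
    (h_agree : ∀ x y : V, ¬((x = b ∧ y = d) ∨ (x = d ∧ y = b)) → cm x y = c x y)
    (h_bd : cm b d = c b d - Δ) (h_db : cm d b = c b d - Δ)
    (u v : V) (S : Finset V) (huS : u ∈ S) (hvS : v ∉ S)
    (hmin : cutCost c S = minCut c u v)
    (hcase : cutCost c S = 0 ∨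
      ((∀ x ∈ S, ∀ y : V, y ∉ S → c x y ≠ 0 → x = u ∧ y = v) ∧ c u v = minCut c u v))
    (hsep : b ∈ S ↔ d ∈ S) :
    cutCost cm S = minCut cm u v :=
  zero_or_bridge_cut_preserved_general c cm b d h_agree u v S huS hvS hmin hcase hsep
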